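/- arXiv:2406.10646 — 4 statements merged into one kernel-verified Lean document; each statement's English description precedes it below -/
import Mathlib

section
/- Let u ≥ 3 be an odd integer and let λ=(λ₀,λ₁,λ₂) be a triple of nonnegative integers with λ₀+λ₁+λ₂=u−3. Then for every positive integer n one has the identity of rational numbers Σ_{m=0}^{n−1} ((u−3)(j_λ−m) + 3(j_λ−m)² − (u/2)·Δ_λ) = n·(n−λ₂−1)·(n+λ₁+1−u/2), and the only positive integer n for which this expression vanishes is n = λ₂+1. (This computes the dimension λ₂+1 of the top space of the irreducible highest-weight Bershadsky–Polyakov minimal-model module with highest weight (j_λ,Δ_λ).) -/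
noncomputable section

/-- `j_λ = -(λ₁-λ₂)/3` for a triple `λ = (λ₀,λ₁,λ₂)`. -/
def jBP (l : ℕ × ℕ × ℕ) : ℚ := -(((l.2.1 : ℚ) - (l.2.2 : ℚ)) / 3)

/-- `Δ_λ = ((λ₁-λ₂)(λ₁-λ₂-u) + 3(λ₁+λ₂)(λ₁+λ₂-u+4))/(6u)`. -/
def DeltaBP (u : ℕ) (l : ℕ × ℕ × ℕ) : ℚ :=
  (((l.2.1 : ℚ) - (l.2.2 : ℚ)) * ((l.2.1 : ℚ) - (l.2.2 : ℚ) - u)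
    + 3 * ((l.2.1 : ℚ) + (l.2.2 : ℚ)) * ((l.2.1 : ℚ) + (l.2.2 : ℚ) - u + 4)) / (6 * u)

/-- For odd `u ≥ 3` and `λ ∈ P⁺ᵘ`, the sum
`Σ_{m=0}^{n-1} ((u-3)(j_λ-m) + 3(j_λ-m)² - (u/2)Δ_λ)` equals
`n(n-λ₂-1)(n+λ₁+1-u/2)`, and for positive `n` it vanishes exactly when `n = λ₂+1`. -/
theorem stmt0 (u : ℕ) (hu : 3 ≤ u) (hodd : Odd u)
    (l : ℕ × ℕ × ℕ) (hsum : l.1 + l.2.1 + l.2.2 = u - 3) :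
    (∀ n : ℕ, 0 < n →
      (∑ m ∈ Finset.range n,
        (((u : ℚ) - 3) * (jBP l - m) + 3 * (jBP l - m) ^ 2
          - ((u : ℚ) / 2) * DeltaBP u l))
      = (n : ℚ) * ((n : ℚ) - (l.2.2 : ℚ) - 1) * ((n : ℚ) + (l.2.1 : ℚ) + 1 - (u : ℚ) / 2)) ∧
    (∀ n : ℕ, 0 < n →
      ((∑ m ∈ Finset.range n,
        (((u : ℚ) - 3) * (jBP l - m) + 3 * (jBP l - m) ^ 2
          - ((u : ℚ) / 2) * DeltaBP u l)) = 0 ↔ n = l.2.2 + 1)) := by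

  have hu0 : (u : ℚ) ≠ 0 := by positivity
  have key : ∀ n : ℕ,
      (∑ m ∈ Finset.range n,
        (((u : ℚ) - 3) * (jBP l - m) + 3 * (jBP l - m) ^ 2
          - ((u : ℚ) / 2) * DeltaBP u l))
      = (n : ℚ) * ((n : ℚ) - (l.2.2 : ℚ) - 1) * ((n : ℚ) + (l.2.1 : ℚ) + 1 - (u : ℚ) / 2) := by
    intro n
    induction n with
    | zero => simp
    | succ k ih =>
      rw [Finset.sum_range_succ, ih, jBP, DeltaBP]
      push_cast
      field_simp
      ring
  refine ⟨fun n _ => key n, fun n hn => ?_⟩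
  rw [key n]
  constructor
  · intro h
    have hn0 : (n : ℚ) ≠ 0 := by exact_mod_cast hn.ne'
    have h3 : (n : ℚ) + (l.2.1 : ℚ) + 1 - (u : ℚ) / 2 ≠ 0 := by
      intro hc
      have : (u : ℚ) = ((2 * (n + l.2.1 + 1) : ℕ) : ℚ) := by push_cast; linarith
      have hueq : u = 2 * (n + l.2.1 + 1) := Nat.cast_injective this
      exact (Nat.not_odd_iff_even.mpr ⟨n + l.2.1 + 1, by omega⟩) hodd
    have h2 : (n : ℚ) - (l.2.2 : ℚ) - 1 = 0 := by
      rcases mul_eq_zero.mp h with h' | h'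
      · rcases mul_eq_zero.mp h' with h'' | h''
        · exact absurd h'' hn0
        · exact h''
      · exact absurd h' h3
    have : (n : ℚ) = ((l.2.2 + 1 : ℕ) : ℚ) := by push_cast; linarith
    exact_mod_cast this
  · intro h
    subst h
    push_cast
    ring


end
end

section
/- Let u ≥ 3 be odd and λ∈P⁺ᵘ. Then j_{∇(λ)} = j_λ − λ₂ + (u−3)/3 and Δ_{∇(λ)} = Δ_λ + j_λ − λ₂ + (u−3)/3; moreover j_{d(∇(λ))} = −(j_λ−λ₂) − (u−3)/3 and Δ_{d(∇(λ))} = Δ_λ. Furthermore, ∇(λ) is the unique μ∈P⁺ᵘ with (j_μ,Δ_μ) = (j_λ−λ₂+(u−3)/3, Δ_λ+j_λ−λ₂+(u−3)/3), and d(∇(λ)) is the unique μ∈P⁺ᵘ with (j_μ,Δ_μ) = (−(j_λ−λ₂)−(u−3)/3, Δ_λ). (These are the weight computations showing that spectral flow and conjugation act on the irreducible Bershadsky–Polyakov minimal-model modules by λ↦∇(λ) and λ↦d(∇(λ)).) -/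
noncomputable section

/-- `∇(λ₀,λ₁,λ₂) = (λ₁,λ₂,λ₀)`. -/
def nabla (l : ℕ × ℕ × ℕ) : ℕ × ℕ × ℕ := (l.2.1, l.2.2, l.1)

/-- `d(λ₀,λ₁,λ₂) = (λ₀,λ₂,λ₁)`. -/
def dd (l : ℕ × ℕ × ℕ) : ℕ × ℕ × ℕ := (l.1, l.2.2, l.2.1)

/-- The pair `(j_λ, Δ_λ)` determines `λ ∈ P⁺ᵘ` for odd `u ≥ 3`. -/
lemma uniqBP (u : ℕ) (hu : 3 ≤ u) (hodd : Odd u) (m m' : ℕ × ℕ × ℕ)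
    (hm : m.1 + m.2.1 + m.2.2 = u - 3) (hm' : m'.1 + m'.2.1 + m'.2.2 = u - 3)
    (hj : jBP m = jBP m') (hd : DeltaBP u m = DeltaBP u m') : m = m' := by
  obtain ⟨a, b, c⟩ := m
  obtain ⟨a', b', c'⟩ := m'
  simp only [jBP, DeltaBP] at hj hd
  simp only at hm hm' ⊢
  have hu0 : (u : ℚ) ≠ 0 := by positivity
  have huQ : (6 * (u : ℚ)) ≠ 0 := by positivity
  have hjQ : (b : ℚ) - c = (b' : ℚ) - c' := by
    field_simp at hj; linarith
  have hnum : ((b : ℚ) - c) * ((b : ℚ) - c - u) + 3 * ((b : ℚ) + c) * ((b : ℚ) + c - u + 4)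
      = ((b' : ℚ) - c') * ((b' : ℚ) - c' - u) + 3 * ((b' : ℚ) + c') * ((b' : ℚ) + c' - u + 4) := by
    rw [div_eq_div_iff huQ huQ] at hd
    exact mul_right_cancel₀ huQ hd
  have key : ((b : ℚ) + c) * ((b : ℚ) + c - u + 4) = ((b' : ℚ) + c') * ((b' : ℚ) + c' - u + 4) := by
    linear_combination hnum / 3 - ((b : ℚ) - c + ((b' : ℚ) - c') - u) / 3 * hjQ
  have hjZ : (b : ℤ) - c = (b' : ℤ) - c' := by exact_mod_cast hjQ
  have keyZ : ((b : ℤ) + c) * ((b : ℤ) + c - u + 4) = ((b' : ℤ) + c') * ((b' : ℤ) + c' - u + 4) := by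
    exact_mod_cast key
  have hfac : (((b : ℤ) + c) - ((b' : ℤ) + c')) * (((b : ℤ) + c) + ((b' : ℤ) + c') - u + 4) = 0 := by
    linear_combination keyZ
  obtain ⟨k, hk⟩ := hodd
  rcases mul_eq_zero.mp hfac with h | h
  · have hb : b = b' := by omega
    have hc : c = c' := by omega
    have ha : a = a' := by omega
    simp [ha, hb, hc]
  · exfalso; omega

/-- Weight computations for spectral flow and conjugation of Bershadsky–Polyakov
highest weights, together with the uniqueness statements. -/
theorem stmt1 (u : ℕ) (hu : 3 ≤ u) (hodd : Odd u)
    (l : ℕ × ℕ × ℕ) (hsum : l.1 + l.2.1 + l.2.2 = u - 3) :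
    jBP (nabla l) = jBP l - (l.2.2 : ℚ) + ((u : ℚ) - 3) / 3 ∧
    DeltaBP u (nabla l) = DeltaBP u l + jBP l - (l.2.2 : ℚ) + ((u : ℚ) - 3) / 3 ∧
    jBP (dd (nabla l)) = -(jBP l - (l.2.2 : ℚ)) - ((u : ℚ) - 3) / 3 ∧
    DeltaBP u (dd (nabla l)) = DeltaBP u l ∧
    (∀ m : ℕ × ℕ × ℕ, m.1 + m.2.1 + m.2.2 = u - 3 →
      ((jBP m = jBP l - (l.2.2 : ℚ) + ((u : ℚ) - 3) / 3 ∧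
        DeltaBP u m = DeltaBP u l + jBP l - (l.2.2 : ℚ) + ((u : ℚ) - 3) / 3)
        ↔ m = nabla l)) ∧
    (∀ m : ℕ × ℕ × ℕ, m.1 + m.2.1 + m.2.2 = u - 3 →
      ((jBP m = -(jBP l - (l.2.2 : ℚ)) - ((u : ℚ) - 3) / 3 ∧
        DeltaBP u m = DeltaBP u l)
        ↔ m = dd (nabla l))) := by
  have hu0 : (u : ℚ) ≠ 0 := by positivity
  have hnsum : l.1 + l.2.1 + l.2.2 + 3 = u := by omega
  have hQ : (l.1 : ℚ) + l.2.1 + l.2.2 + 3 = u := by exact_mod_cast hnsum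
  have ha : (l.1 : ℚ) = (u : ℚ) - 3 - l.2.1 - l.2.2 := by linarith
  have hnab : (nabla l).1 + (nabla l).2.1 + (nabla l).2.2 = u - 3 := by
    simp only [nabla]; omega
  have hddn : (dd (nabla l)).1 + (dd (nabla l)).2.1 + (dd (nabla l)).2.2 = u - 3 := by
    simp only [dd, nabla]; omega
  have h1 : jBP (nabla l) = jBP l - (l.2.2 : ℚ) + ((u : ℚ) - 3) / 3 := by
    simp only [jBP, nabla]; rw [ha]; ring
  have h2 : DeltaBP u (nabla l) = DeltaBP u l + jBP l - (l.2.2 : ℚ) + ((u : ℚ) - 3) / 3 := by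
    simp only [jBP, DeltaBP, nabla]; rw [ha]; field_simp; ring
  have h3 : jBP (dd (nabla l)) = -(jBP l - (l.2.2 : ℚ)) - ((u : ℚ) - 3) / 3 := by
    simp only [jBP, dd, nabla]; rw [ha]; ring
  have h4 : DeltaBP u (dd (nabla l)) = DeltaBP u l := by
    simp only [DeltaBP, dd, nabla]; rw [ha]; field_simp; ring
  refine ⟨h1, h2, h3, h4, ?_, ?_⟩
  · intro m hm
    constructor
    · rintro ⟨hjm, hdm⟩
      exact uniqBP u hu hodd m (nabla l) hm hnab (by rw [hjm, h1]) (by rw [hdm, h2])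
    · rintro rfl; exact ⟨h1, h2⟩
  · intro m hm
    constructor
    · rintro ⟨hjm, hdm⟩
      exact uniqBP u hu hodd m (dd (nabla l)) hm hddn (by rw [hjm, h3]) (by rw [hdm, h4])
    · rintro rfl; exact ⟨h3, h4⟩

end
end

section
/- Let u≥3 be odd and define G_{λ,λ′} = (i/(√3·u))·Σ_{w∈S₃}det(w)·e^{−4πi⟨w(λ̄+ρ),λ̄′+ρ⟩/u} for λ,λ′∈P⁺ᵘ. Then there exist a bijection π: P⁺ᵘ → P⁺ᵘ and a function ε: P⁺ᵘ → {1,−1} such that G_{λ,λ′} = ε(λ′)·𝒮ᵘ_{λ,π(λ′)} for all λ,λ′∈P⁺ᵘ. (The Galois transform of the level-(u−3) sl₃ S-matrix acts by a signed permutation of its columns.) -/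
noncomputable section

open Complex

/-- The six elements of the Weyl group `S₃` of sl₃ acting on weights in
Dynkin-label coordinates: `id, w₁, w₂, w₁w₂, w₂w₁, w₃`. -/
def wmap (w : Fin 6) (x : ℂ × ℂ) : ℂ × ℂ :=
  ![x, (-x.1, x.1 + x.2), (x.1 + x.2, -x.2), (-x.1 - x.2, x.1),
    (x.2, -x.1 - x.2), (-x.2, -x.1)] w

/-- The signs of the six Weyl group elements. -/
def wdet : Fin 6 → ℤ := ![1, -1, -1, 1, 1, -1]

/-- The normalised invariant bilinear form of sl₃ in Dynkin-label coordinates. -/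
def bform (x y : ℂ × ℂ) : ℂ :=
  (2 * x.1 * y.1 + x.1 * y.2 + x.2 * y.1 + 2 * x.2 * y.2) / 3

/-- The Weyl vector `ρ = (1,1)`. -/
def rho : ℂ × ℂ := (1, 1)

/-- The set `P⁺ᵘ` of triples of nonnegative integers summing to `u-3`. -/
def Pplus (u : ℕ) : Finset (ℕ × ℕ × ℕ) :=
  (Finset.range u ×ˢ Finset.range u ×ˢ Finset.range u).filter
    (fun l => l.1 + l.2.1 + l.2.2 = u - 3)

/-- The finite part `λ̄ = (λ₁,λ₂)` of a triple `λ = (λ₀,λ₁,λ₂)`. -/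
def bar (l : ℕ × ℕ × ℕ) : ℂ × ℂ := ((l.2.1 : ℂ), (l.2.2 : ℂ))

/-- The level-`(u-3)` sl₃ WZW S-matrix entry `𝒮ᵘ_{λ,λ′}`. -/
def ScalP (u : ℕ) (l l' : ℕ × ℕ × ℕ) : ℂ :=
  (-I / (Real.sqrt 3 * u)) *
    ∑ w : Fin 6, (wdet w : ℂ) *
      exp (-2 * Real.pi * I * bform (wmap w (bar l + rho)) (bar l' + rho) / u)

/-- The Galois transform `G_{λ,λ′} = (i/(√3·u))·Σ_{w∈S₃}det(w)·e^{-4πi⟨w(λ̄+ρ),λ̄′+ρ⟩/u}`. -/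
def Gmat (u : ℕ) (l l' : ℕ × ℕ × ℕ) : ℂ :=
  (I / (Real.sqrt 3 * u)) *
    ∑ w : Fin 6, (wdet w : ℂ) *
      exp (-4 * Real.pi * I * bform (wmap w (bar l + rho)) (bar l' + rho) / u)

/- `G_{λ,λ'}` is the Weyl-antisymmetrised exponential sum of `𝒮ᵘ` evaluated at
`2(λ̄'+ρ)` instead of `λ̄'+ρ`. In its second argument that sum is `det`-antisymmetric under
the Weyl group and invariant under translation by `u` times the root lattice (roots pair
integrally with integral weights). For odd `u` the point `2(λ̄'+ρ)` lies on no wall of the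
affine Weyl group at level `u`, so `2(λ̄'+ρ) = w'(π(λ')+ρ) + uβ` with `π(λ')+ρ` in the open
fundamental alcove; hence `ε(λ') = -det w'`, the extra sign coming from `i = -(-i)`. -/

open Finset

def weylSum (u : ℕ) (x y : ℂ × ℂ) : ℂ :=
  ∑ w : Fin 6, (wdet w : ℂ) * exp (-2 * Real.pi * I * bform (wmap w x) y / u)

lemma bform_add_right (x y z : ℂ × ℂ) : bform x (y + z) = bform x y + bform x z := by
  simp only [bform, Prod.fst_add, Prod.snd_add]; ring

lemma bform_smul_right (c : ℂ) (x y : ℂ × ℂ) : bform x (c • y) = c * bform x y := by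
  simp only [bform, Prod.smul_fst, Prod.smul_snd, smul_eq_mul]; ring

lemma ScalP_eq_weylSum (u : ℕ) (l l' : ℕ × ℕ × ℕ) :
    ScalP u l l' = (-I / (Real.sqrt 3 * u)) * weylSum u (bar l + rho) (bar l' + rho) := rfl

lemma Gmat_eq_weylSum (u : ℕ) (l l' : ℕ × ℕ × ℕ) :
    Gmat u l l' =
      (I / (Real.sqrt 3 * u)) * weylSum u (bar l + rho) ((2 : ℂ) • (bar l' + rho)) := by
  simp only [Gmat, weylSum, bform_smul_right]
  congr 1
  refine sum_congr rfl fun w _ => ?_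
  ring_nf

lemma weylSum_wmap_right (u : ℕ) (x y : ℂ × ℂ) (w : Fin 6) :
    weylSum u x (wmap w y) = wdet w * weylSum u x y := by
  fin_cases w <;>
    simp only [weylSum, Fin.sum_univ_six, wmap, wdet, bform, Matrix.cons_val, Matrix.cons_val_zero,
      Matrix.cons_val_one, Fin.reduceFinMk, Fin.zero_eta, Fin.mk_one, Fin.isValue, Int.reduceNeg,
      Int.cast_one, Int.cast_neg] <;>
    ring_nf

/-- `n₁α₁ + n₂α₂` for the simple roots `α₁ = (2,-1)`, `α₂ = (-1,2)` in Dynkin labels. -/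
def rootVec (n₁ n₂ : ℤ) : ℂ × ℂ := (2 * n₁ - n₂, 2 * n₂ - n₁)

lemma bform_rootVec (z : ℂ × ℂ) (n₁ n₂ : ℤ) :
    bform z (rootVec n₁ n₂) = n₁ * z.1 + n₂ * z.2 := by
  simp only [bform, rootVec]; ring

lemma exists_intCast_wmap (w : Fin 6) (a b : ℤ) :
    ∃ c d : ℤ, wmap w ((a : ℂ), (b : ℂ)) = ((c : ℂ), (d : ℂ)) := by
  fin_cases w
  exacts [⟨a, b, rfl⟩, ⟨-a, a + b, by push_cast; rfl⟩, ⟨a + b, -b, by push_cast; rfl⟩,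
    ⟨-a - b, a, by push_cast; rfl⟩, ⟨b, -a - b, by push_cast; rfl⟩, ⟨-b, -a, by push_cast; rfl⟩]

lemma exp_bform_add_smul_of_eq_intCast {u : ℕ} (hu : u ≠ 0) {z β : ℂ × ℂ} {k : ℤ}
    (hk : bform z β = k) (y : ℂ × ℂ) :
    exp (-2 * Real.pi * I * bform z (y + (u : ℂ) • β) / u) =
      exp (-2 * Real.pi * I * bform z y / u) := by
  have hu' : (u : ℂ) ≠ 0 := Nat.cast_ne_zero.mpr hu
  rw [bform_add_right, bform_smul_right, hk,
    show -2 * Real.pi * I * (bform z y + u * k) / u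
      = -2 * Real.pi * I * bform z y / u + (-k : ℤ) * (2 * Real.pi * I) by
        push_cast; field_simp; ring,
    exp_add, exp_int_mul_two_pi_mul_I, mul_one]

lemma weylSum_add_smul_rootVec {u : ℕ} (hu : u ≠ 0) {x : ℂ × ℂ}
    (hx : ∃ a b : ℤ, x = ((a : ℂ), (b : ℂ))) (y : ℂ × ℂ) (n₁ n₂ : ℤ) :
    weylSum u x (y + (u : ℂ) • rootVec n₁ n₂) = weylSum u x y := by
  obtain ⟨a, b, rfl⟩ := hx
  refine sum_congr rfl fun w _ => ?_
  obtain ⟨c, d, hcd⟩ := exists_intCast_wmap w a b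
  have hk : bform (c, d) (rootVec n₁ n₂) = (n₁ * c + n₂ * d : ℤ) := by
    rw [bform_rootVec]; push_cast; ring
  rw [hcd, exp_bform_add_smul_of_eq_intCast hu hk]

/-- The Weyl group element `w'` with `2(λ̄+ρ) ∈ w'(C) + u·Q` for the open fundamental alcove `C`
at level `u` and the root lattice `Q`. -/
def galoisWeyl (u : ℕ) (m : ℕ × ℕ × ℕ) : Fin 6 :=
  if u < 2 * m.2.1 + 2 then 4
  else if u < 2 * m.2.2 + 2 then 3
  else if u < 2 * m.2.1 + 2 * m.2.2 + 4 then 5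
  else 0

/-- The point of `P⁺ᵘ` whose `λ̄+ρ` is the representative in `C` of `2(λ̄+ρ)` modulo the
affine Weyl group. -/
def galoisPerm (u : ℕ) (m : ℕ × ℕ × ℕ) : ℕ × ℕ × ℕ :=
  if u < 2 * m.2.1 + 2 then
    (2 * m.2.2 + 1, 2 * u - (2 * m.2.1 + 2 * m.2.2 + 5), 2 * m.2.1 + 1 - u)
  else if u < 2 * m.2.2 + 2 then
    (2 * m.2.1 + 1, 2 * m.2.2 + 1 - u, 2 * u - (2 * m.2.1 + 2 * m.2.2 + 5))
  else if u < 2 * m.2.1 + 2 * m.2.2 + 4 then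
    (2 * m.2.1 + 2 * m.2.2 + 3 - u, u - (2 * m.2.2 + 3), u - (2 * m.2.1 + 3))
  else
    (u - (2 * m.2.1 + 2 * m.2.2 + 5), 2 * m.2.1 + 1, 2 * m.2.2 + 1)

lemma mem_Pplus {u : ℕ} {m : ℕ × ℕ × ℕ} :
    m ∈ Pplus u ↔ (m.1 < u ∧ m.2.1 < u ∧ m.2.2 < u) ∧ m.1 + m.2.1 + m.2.2 = u - 3 := by
  simp only [Pplus, mem_filter, mem_product, mem_range]

lemma galoisPerm_mapsTo {u : ℕ} (hu : 3 ≤ u) (hodd : Odd u) :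
    Set.MapsTo (galoisPerm u) (Pplus u) (Pplus u) := by
  obtain ⟨k, rfl⟩ := hodd
  intro m hm
  rw [mem_coe, mem_Pplus] at hm ⊢
  unfold galoisPerm
  split_ifs <;> dsimp only <;> omega

lemma galoisPerm_injOn {u : ℕ} (hodd : Odd u) : Set.InjOn (galoisPerm u) (Pplus u) := by
  obtain ⟨k, rfl⟩ := hodd
  rintro ⟨a₀, a₁, a₂⟩ ha ⟨b₀, b₁, b₂⟩ hb h
  rw [mem_coe, mem_Pplus] at ha hb
  dsimp only at ha hb
  unfold galoisPerm at h
  dsimp only at h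
  simp only [Prod.mk.injEq]
  split_ifs at h <;> simp only [Prod.mk.injEq] at h <;> omega

lemma galoisPerm_bijOn {u : ℕ} (hu : 3 ≤ u) (hodd : Odd u) :
    Set.BijOn (galoisPerm u) (Pplus u) (Pplus u) :=
  ((Pplus u).finite_toSet.injOn_iff_bijOn_of_mapsTo (galoisPerm_mapsTo hu hodd)).mp
    (galoisPerm_injOn hodd)

lemma exists_two_smul_bar_add_rho_eq {u : ℕ} (hu : 3 ≤ u) (hodd : Odd u) {m : ℕ × ℕ × ℕ}
    (hm : m ∈ Pplus u) :
    ∃ n : ℤ, (2 : ℂ) • (bar m + rho) =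
      wmap (galoisWeyl u m) (bar (galoisPerm u m) + rho) + (u : ℂ) • rootVec n n := by
  obtain ⟨k, rfl⟩ := hodd
  rw [mem_Pplus] at hm
  unfold galoisWeyl galoisPerm
  split_ifs with h₁ h₂ h₃
  on_goal 1 => use 1
  on_goal 2 => use 1
  on_goal 3 => use 1
  on_goal 4 => use 0
  all_goals
    ext <;>
      simp (disch := omega) only [bar, rho, wmap, rootVec, Prod.smul_fst, Prod.smul_snd,
        Prod.fst_add, Prod.snd_add, smul_eq_mul, Matrix.cons_val, Matrix.cons_val_zero,
        Fin.isValue, Nat.cast_sub] <;>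
      push_cast <;> ring

lemma wdet_eq_one_or_neg_one (w : Fin 6) : wdet w = 1 ∨ wdet w = -1 := by
  fin_cases w <;> decide

/-- The Galois transform of the level-`(u-3)` sl₃ S-matrix acts by a signed
permutation of its columns: there exist a bijection `π` of `P⁺ᵘ` and a sign
function `ε : P⁺ᵘ → {1,-1}` with `G_{λ,λ′} = ε(λ′)·𝒮ᵘ_{λ,π(λ′)}`. -/
theorem stmt9 (u : ℕ) (hu : 3 ≤ u) (hodd : Odd u) :
    ∃ (p : ℕ × ℕ × ℕ → ℕ × ℕ × ℕ) (eps : ℕ × ℕ × ℕ → ℂ),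
      Set.BijOn p (Pplus u : Set (ℕ × ℕ × ℕ)) (Pplus u : Set (ℕ × ℕ × ℕ)) ∧
      (∀ l ∈ Pplus u, eps l = 1 ∨ eps l = -1) ∧
      (∀ l ∈ Pplus u, ∀ l' ∈ Pplus u, Gmat u l l' = eps l' * ScalP u l (p l')) := by
  refine ⟨galoisPerm u, fun m => -(wdet (galoisWeyl u m) : ℂ), galoisPerm_bijOn hu hodd,
    fun m _ => ?_, fun l _ m hm => ?_⟩
  · rcases wdet_eq_one_or_neg_one (galoisWeyl u m) with h | h <;> simp [h]
  · obtain ⟨n, hn⟩ := exists_two_smul_bar_add_rho_eq hu hodd hm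
    have hl : ∃ a b : ℤ, bar l + rho = ((a : ℂ), (b : ℂ)) :=
      ⟨l.2.1 + 1, l.2.2 + 1, by simp [bar, rho]⟩
    rw [Gmat_eq_weylSum, hn, weylSum_add_smul_rootVec (by omega) hl, weylSum_wmap_right,
      ScalP_eq_weylSum]
    ring

end
end

section
/- Let u≥3 be an integer. For every Λ∈P⁺ᵘ: 𝒮ᵘ_{vac,Λ} = (8/(√3·u))·sin(π(Λ₁+1)/u)·sin(π(Λ₂+1)/u)·sin(π(Λ₁+Λ₂+2)/u), and in particular 𝒮ᵘ_{vac,Λ} is a strictly positive real number. -/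
noncomputable section

open Complex

/-- The vacuum weight `vac = (u-3,0,0)`. -/
def vac (u : ℕ) : ℕ × ℕ × ℕ := (u - 3, 0, 0)

/-!
The Weyl orbit of `ρ` pairs with `Λ̄ + ρ = (a, b)` to `±a, ±b, ±(a + b)`, so the alternating
sum in `𝒮ᵘ_{vac,Λ}` collapses to three sines, `sin 2x + sin 2y - sin (2x + 2y)` with
`x = πa/u`, `y = πb/u`; this is `4 sin x sin y sin (x + y)`. For `Λ ∈ P⁺ᵘ` the three angles
`x, y, x + y` lie strictly between `0` and `π`, which gives positivity.
-/

theorem sin_two_mul_add_sin_two_mul_sub_sin_add (x y : ℝ) :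
    Real.sin (2 * x) + Real.sin (2 * y) - Real.sin (2 * x + 2 * y) =
      4 * Real.sin x * Real.sin y * Real.sin (x + y) := by
  rw [← mul_add, Real.sin_two_mul, Real.sin_two_mul, Real.sin_two_mul, Real.sin_add, Real.cos_add]
  linear_combination (-2 * Real.sin x * Real.cos x) * Real.sin_sq_add_cos_sq y +
    (-2 * Real.sin y * Real.cos y) * Real.sin_sq_add_cos_sq x

theorem sin_pi_mul_div_pos {x u : ℝ} (hx : 0 < x) (hxu : x < u) :
    0 < Real.sin (Real.pi * x / u) := by
  have hu : 0 < u := hx.trans hxu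
  apply Real.sin_pos_of_pos_of_lt_pi
  · have := Real.pi_pos
    positivity
  · rw [div_lt_iff₀ hu]
    exact mul_lt_mul_of_pos_left hxu Real.pi_pos

theorem sum_wdet_mul_exp_bform_rho (θ : ℂ) (y : ℂ × ℂ) :
    ∑ w : Fin 6, (wdet w : ℂ) * exp (-θ * I * bform (wmap w rho) y) =
      2 * I * (sin (θ * y.1) + sin (θ * y.2) - sin (θ * (y.1 + y.2))) := by
  simp only [Fin.sum_univ_succ, Fin.sum_univ_zero, wmap, wdet, rho, bform, Complex.sin]
  push_cast
  ring_nf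
  rw [I_sq]
  ring

theorem ScalP_vac_eq (u : ℕ) (L : ℕ × ℕ × ℕ) :
    ScalP u (vac u) L =
      (((8 / (Real.sqrt 3 * u)) * Real.sin (Real.pi * (L.2.1 + 1) / u) *
        Real.sin (Real.pi * (L.2.2 + 1) / u) *
        Real.sin (Real.pi * (L.2.1 + 1) / u + Real.pi * (L.2.2 + 1) / u) : ℝ) : ℂ) := by
  set x := Real.pi * (L.2.1 + 1) / u
  set y := Real.pi * (L.2.2 + 1) / u
  have hprod : 8 / (Real.sqrt 3 * u) * Real.sin x * Real.sin y * Real.sin (x + y) =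
      2 / (Real.sqrt 3 * u) * (Real.sin (2 * x) + Real.sin (2 * y) - Real.sin (2 * x + 2 * y)) := by
    rw [sin_two_mul_add_sin_two_mul_sub_sin_add]; ring
  have hvac : bar (vac u) + rho = rho := by simp [bar, vac, rho]
  have harg (z : ℂ) : -2 * Real.pi * I * z / u = -(2 * Real.pi / u) * I * z := by ring
  rw [hprod, ScalP, hvac]
  simp only [harg, sum_wdet_mul_exp_bform_rho]
  simp only [bar, rho, Prod.fst_add, Prod.snd_add, x, y]
  push_cast
  ring_nf
  rw [I_sq]
  ring

/-- The vacuum row of the level-`(u-3)` sl₃ S-matrix: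
`𝒮ᵘ_{vac,Λ} = (8/(√3·u))·sin(π(Λ₁+1)/u)·sin(π(Λ₂+1)/u)·sin(π(Λ₁+Λ₂+2)/u)`,
a strictly positive real number. -/
theorem stmt16 (u : ℕ) (hu : 3 ≤ u) (L : ℕ × ℕ × ℕ) (hL : L ∈ Pplus u) :
    ScalP u (vac u) L =
      (((8 / (Real.sqrt 3 * u)) * Real.sin (Real.pi * (L.2.1 + 1) / u) *
        Real.sin (Real.pi * (L.2.2 + 1) / u) *
        Real.sin (Real.pi * (L.2.1 + L.2.2 + 2) / u) : ℝ) : ℂ) ∧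
    0 < (8 / (Real.sqrt 3 * u)) * Real.sin (Real.pi * (L.2.1 + 1) / u) *
        Real.sin (Real.pi * (L.2.2 + 1) / u) *
        Real.sin (Real.pi * (L.2.1 + L.2.2 + 2) / u) := by
  have hsum : L.1 + L.2.1 + L.2.2 = u - 3 := (Finset.mem_filter.mp hL).2
  have hlt : (L.2.1 + L.2.2 + 2 : ℝ) < u := by
    have : L.2.1 + L.2.2 + 2 < u := by omega
    exact_mod_cast this
  have hangle : Real.pi * (L.2.1 + L.2.2 + 2) / u =
      Real.pi * (L.2.1 + 1) / u + Real.pi * (L.2.2 + 1) / u := by ring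
  have hL₁ : (0 : ℝ) ≤ L.2.1 := Nat.cast_nonneg _
  have hL₂ : (0 : ℝ) ≤ L.2.2 := Nat.cast_nonneg _
  have s₁ := sin_pi_mul_div_pos (x := L.2.1 + 1) (u := u) (by positivity) (by linarith)
  have s₂ := sin_pi_mul_div_pos (x := L.2.2 + 1) (u := u) (by positivity) (by linarith)
  have s₃ := sin_pi_mul_div_pos (by positivity) hlt
  have hu₀ : (0 : ℝ) < u := by positivity
  exact ⟨hangle ▸ ScalP_vac_eq u L, by positivity⟩
end
end
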